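/- Let p ∈ (1,2], κ ≥ 0, R₊ a positive root system with |α|² = 2, and define for nonnegative f ∈ C_c^∞(ℝ^d) the pseudo-gradient G_p(f) = (1/p)[f^{2−p} Δ_κ(f^p) − p f Δ_κ f]. Then for every x off the reflection hyperplanes: G_p(f)(x) = (p−1)|∇f(x)|² + 2(p−1) Σ_{α∈R₊} (κ_α/⟨α,x⟩²) · 1{f(x) ≠ f(r_α x)} · (f(r_α x) − f(x))² · ∫₀¹ f(x)^{2−p}(1−s)/[(1−s)f(x) + s f(r_α x)]^{2−p} ds. -/

import Mathlib

noncomputable section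

/-- Euclidean dot product on `ℝ^d`. -/
def dotd {d : ℕ} (x y : Fin d → ℝ) : ℝ := ∑ i, x i * y i

/-- Reflection in the hyperplane orthogonal to `α` (for `|α|² = 2`). -/
def reflAt {d : ℕ} (α x : Fin d → ℝ) : Fin d → ℝ := fun i => x i - dotd α x * α i

/-- Partial derivative in the `i`-th coordinate direction. -/
def pd {d : ℕ} (f : (Fin d → ℝ) → ℝ) (i : Fin d) (x : Fin d → ℝ) : ℝ :=
  fderiv ℝ f x (Pi.single i 1)

/-- Euclidean Laplacian. -/
def lapd {d : ℕ} (f : (Fin d → ℝ) → ℝ) (x : Fin d → ℝ) : ℝ := ∑ i, pd (pd f i) i x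

/-- The Dunkl Laplacian associated to the positive subsystem `R` and multiplicity `κ`. -/
def dunklLap {d : ℕ} (R : Finset (Fin d → ℝ)) (κ : (Fin d → ℝ) → ℝ)
    (f : (Fin d → ℝ) → ℝ) (x : Fin d → ℝ) : ℝ :=
  lapd f x + 2 * ∑ α ∈ R, κ α *
    ((∑ i, α i * pd f i x) / dotd α x - (f x - f (reflAt α x)) / (dotd α x) ^ 2)

/-- The pseudo-gradient `G_p(f) = (1/p)[f^{2−p} Δ_κ(f^p) − p f Δ_κ f]` (real powers). -/
def Gp {d : ℕ} (p : ℝ) (R : Finset (Fin d → ℝ)) (κ : (Fin d → ℝ) → ℝ)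
    (f : (Fin d → ℝ) → ℝ) (x : Fin d → ℝ) : ℝ :=
  (1 / p) * ((f x) ^ (2 - p) * dunklLap R κ (fun y => (f y) ^ p) x
    - p * f x * dunklLap R κ f x)

open Real intervalIntegral Set Filter

section AuxInt

lemma lemA {p u v : ℝ} (hp1 : 1 < p) (hu : 0 < u) (hv : 0 < v) :
    ∫ s in (0:ℝ)..1, (1 - s) * (p * (p - 1) * (v - u) ^ 2 * ((1 - s) * u + s * v) ^ (p - 2))
      = v ^ p - u ^ p - p * u ^ (p - 1) * (v - u) := by
  have hwpos : ∀ s ∈ Set.uIcc (0:ℝ) 1, 0 < (1 - s) * u + s * v := by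
    intro s hs
    rw [Set.uIcc_of_le (by norm_num)] at hs
    obtain ⟨h0, h1⟩ := hs
    rcases eq_or_lt_of_le h1 with h | h
    · subst h; simpa using hv
    · have : 0 < (1 - s) * u := mul_pos (by linarith) hu
      nlinarith [mul_nonneg h0 hv.le]
  have hw : ∀ s : ℝ, HasDerivAt (fun t : ℝ => (1 - t) * u + t * v) (v - u) s := by
    intro s
    have h := (((hasDerivAt_const s (1:ℝ)).sub (hasDerivAt_id s)).mul_const u).add
      ((hasDerivAt_id s).mul_const v)
    exact h.congr_deriv (by ring)
  have key : ∀ s ∈ Set.uIcc (0:ℝ) 1,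
      HasDerivAt (fun t : ℝ => (1 - t) * (p * ((1 - t) * u + t * v) ^ (p - 1) * (v - u))
          + ((1 - t) * u + t * v) ^ p)
        ((1 - s) * (p * (p - 1) * (v - u) ^ 2 * ((1 - s) * u + s * v) ^ (p - 2))) s := by
    intro s hs
    have hws := hwpos s hs
    have hd1 : HasDerivAt (fun t : ℝ => ((1 - t) * u + t * v) ^ (p - 1))
        ((v - u) * (p - 1) * ((1 - s) * u + s * v) ^ (p - 2)) s := by
      have := (hw s).rpow_const (p := p - 1) (Or.inl hws.ne')
      have hpp : p - 1 - 1 = p - 2 := by ring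
      rwa [hpp] at this
    have hd2 : HasDerivAt (fun t : ℝ => ((1 - t) * u + t * v) ^ p)
        ((v - u) * p * ((1 - s) * u + s * v) ^ (p - 1)) s := by
      exact (hw s).rpow_const (p := p) (Or.inl hws.ne')
    have hlin : HasDerivAt (fun t : ℝ => (1 - t)) (-1) s := by
      simpa using (hasDerivAt_id s).const_sub (1:ℝ)
    have := (hlin.mul ((hd1.const_mul p).mul_const (v - u))).add hd2
    exact this.congr_deriv (by ring)
  have hint : IntervalIntegrable
      (fun s : ℝ => (1 - s) * (p * (p - 1) * (v - u) ^ 2 * ((1 - s) * u + s * v) ^ (p - 2)))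
      MeasureTheory.volume 0 1 := by
    apply ContinuousOn.intervalIntegrable
    apply ContinuousOn.mul
    · fun_prop
    · apply ContinuousOn.mul
      · fun_prop
      · apply ContinuousOn.rpow_const
        · fun_prop
        · intro s hs; exact Or.inl (hwpos s hs).ne'
  have := intervalIntegral.integral_eq_sub_of_hasDerivAt key hint
  rw [this]
  norm_num
  ring

lemma rpow_cancel1 {p u : ℝ} (hu : 0 < u) : u ^ (2 - p) * u ^ p = u ^ 2 := by
  rw [← Real.rpow_natCast u 2, ← Real.rpow_add hu]
  norm_num

lemma rpow_cancel2 {p u : ℝ} (hu : 0 < u) : u ^ (2 - p) * u ^ (p - 1) = u := by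
  rw [← Real.rpow_add hu, show 2 - p + (p - 1) = 1 by ring, Real.rpow_one]

lemma rpow_cancel3 {p u : ℝ} (hu : 0 < u) : u ^ (2 - p) * u ^ (p - 2) = 1 := by
  rw [← Real.rpow_add hu, show 2 - p + (p - 2) = 0 by ring, Real.rpow_zero]

lemma lemKey {p u v : ℝ} (hp1 : 1 < p) (hp2 : p ≤ 2) (hu : 0 < u) (hv : 0 ≤ v) :
    u ^ (2 - p) * v ^ p - u ^ 2 - p * u * (v - u)
      = p * (p - 1) * (v - u) ^ 2
        * ∫ s in (0:ℝ)..1, u ^ (2 - p) * (1 - s) / ((1 - s) * u + s * v) ^ (2 - p) := by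
  rcases eq_or_lt_of_le hv with hv0 | hvpos
  · have hv0 : v = 0 := hv0.symm
    subst hv0
    have hI : (∫ s in (0:ℝ)..1, u ^ (2 - p) * (1 - s) / ((1 - s) * u + s * 0) ^ (2 - p))
        = ∫ s in (0:ℝ)..1, (1 - s) ^ (p - 1) := by
      apply intervalIntegral.integral_congr
      intro s hs
      dsimp only
      rw [Set.uIcc_of_le (by norm_num)] at hs
      rcases eq_or_lt_of_le hs.2 with h1 | h1
      · subst h1
        norm_num
        rw [Real.zero_rpow (by linarith : p - 1 ≠ 0)]
      · have ht : (0:ℝ) < 1 - s := by linarith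
        rw [mul_zero, add_zero, Real.mul_rpow ht.le hu.le]
        have h3 : (1 - s) ^ (p - 1) * (1 - s) ^ (2 - p) = 1 - s := by
          rw [← Real.rpow_add ht, show p - 1 + (2 - p) = 1 by ring, Real.rpow_one]
        rw [div_eq_iff (by positivity)]
        linear_combination (-(u ^ (2 - p))) * h3
    rw [hI, intervalIntegral.integral_comp_sub_left (fun t => t ^ (p - 1)) 1]
    norm_num
    rw [integral_rpow (Or.inl (by linarith))]
    rw [Real.zero_rpow (by positivity : p ≠ 0), Real.one_rpow,
      Real.zero_rpow (by linarith : p - 1 + 1 ≠ 0)]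
    field_simp
    linear_combination (u ^ 2 - p * u ^ 2) * mul_inv_cancel₀ (show p ≠ 0 by linarith)
  · have hwpos : ∀ s ∈ Set.uIcc (0:ℝ) 1, 0 < (1 - s) * u + s * v := by
      intro s hs
      rw [Set.uIcc_of_le (by norm_num)] at hs
      obtain ⟨h0, h1⟩ := hs
      rcases eq_or_lt_of_le h1 with h | h
      · subst h; simpa using hvpos
      · nlinarith [mul_nonneg h0 hvpos.le]
    have hI : (∫ s in (0:ℝ)..1, u ^ (2 - p) * (1 - s) / ((1 - s) * u + s * v) ^ (2 - p))
        = u ^ (2 - p) * ∫ s in (0:ℝ)..1, (1 - s) * ((1 - s) * u + s * v) ^ (p - 2) := by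
      rw [← intervalIntegral.integral_const_mul]
      apply intervalIntegral.integral_congr
      intro s hs
      dsimp only
      have hws := hwpos s hs
      rw [div_eq_mul_inv, ← Real.rpow_neg hws.le, show -(2 - p) = p - 2 by ring]
      ring
    have hA := lemA hp1 hu hvpos
    have hA' : (∫ s in (0:ℝ)..1, (1 - s) * ((1 - s) * u + s * v) ^ (p - 2))
        * (p * (p - 1) * (v - u) ^ 2)
        = v ^ p - u ^ p - p * u ^ (p - 1) * (v - u) := by
      rw [← hA, ← intervalIntegral.integral_mul_const]
      apply intervalIntegral.integral_congr
      intro s _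
      dsimp only
      ring
    rw [hI]
    have e1 := rpow_cancel1 (p := p) hu
    have e2 := rpow_cancel2 (p := p) hu
    linear_combination (-(u ^ (2 - p))) * hA' + e1 + p * (v - u) * e2

end AuxInt

theorem Gp_formula {d : ℕ} (p : ℝ) (hp1 : 1 < p) (hp2 : p ≤ 2)
    (R : Finset (Fin d → ℝ)) (κ : (Fin d → ℝ) → ℝ)
    (hlen : ∀ α ∈ R, dotd α α = 2) (hκ : ∀ α ∈ R, 0 ≤ κ α)
    (f : (Fin d → ℝ) → ℝ) (hf : ContDiff ℝ (⊤ : ℕ∞) f) (hfc : HasCompactSupport f)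
    (hf0 : ∀ y, 0 ≤ f y)
    (x : Fin d → ℝ) (hx : ∀ α ∈ R, dotd α x ≠ 0) :
    Gp p R κ f x
      = (p - 1) * ∑ j, (pd f j x) ^ 2
        + 2 * (p - 1) * ∑ α ∈ R, κ α / (dotd α x) ^ 2 *
            (if f x = f (reflAt α x) then 0 else
              (f (reflAt α x) - f x) ^ 2 *
                ∫ s in (0:ℝ)..1, (f x) ^ (2 - p) * (1 - s) /
                  ((1 - s) * f x + s * f (reflAt α x)) ^ (2 - p)) := by
  have hp0 : p ≠ 0 := by positivity
  have hfd : Differentiable ℝ f := hf.differentiable (by simp)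
  have hpdc : ∀ i, ContDiff ℝ (⊤ : ℕ∞) (pd f i) := fun i =>
    (hf.fderiv_right (by simp)).clm_apply contDiff_const
  have hpdd : ∀ i, Differentiable ℝ (pd f i) := fun i => (hpdc i).differentiable (by simp)
  rcases eq_or_lt_of_le (hf0 x) with h0 | hupos
  · -- f x = 0
    have hfx : f x = 0 := h0.symm
    have hmin : IsLocalMin f x := Filter.Eventually.of_forall (fun y => by
      rw [hfx]; exact hf0 y)
    have hpdz : ∀ j, pd f j x = 0 := by
      intro j; rw [pd, hmin.fderiv_eq_zero]; simp
    rcases eq_or_lt_of_le hp2 with hpe | hplt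
    · -- p = 2
      subst hpe
      have hg : (fun y : Fin d → ℝ => f y ^ (2:ℝ)) = fun y => f y * f y := by
        funext y
        rw [show (2:ℝ) = ((2:ℕ):ℝ) by norm_num, Real.rpow_natCast]
        ring
      have hpdg : ∀ i, pd (fun y : Fin d → ℝ => f y * f y) i
          = fun y => 2 * f y * pd f i y := by
        intro i; funext y
        rw [pd, HasFDerivAt.fderiv (f := fun y => f y * f y)
          ((hfd y).hasFDerivAt.mul (hfd y).hasFDerivAt)]
        simp only [ContinuousLinearMap.add_apply, ContinuousLinearMap.smul_apply, smul_eq_mul]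
        rw [← pd]; ring
      have hpd2 : ∀ i, pd (pd (fun y : Fin d → ℝ => f y * f y) i) i x = 0 := by
        intro i
        rw [hpdg i, pd]
        have h3 := ((hfd x).hasFDerivAt.const_mul (2:ℝ)).mul (hpdd i x).hasFDerivAt
        rw [HasFDerivAt.fderiv (f := fun y => 2 * f y * pd f i y) h3]
        simp [hfx, hpdz i, ContinuousLinearMap.add_apply, smul_eq_mul]
      have hhalf : (∫ s in (0:ℝ)..1, (1 - s)) = 1/2 := by
        have h := intervalIntegral.integral_comp_sub_left (fun t : ℝ => t) 1 (a := 0) (b := 1)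
        norm_num at h
        simpa using h
      simp only [Gp, hg, dunklLap, lapd, hpd2, Finset.sum_const_zero, zero_add]
      rw [show (2:ℝ) - 2 = 0 by norm_num]
      simp only [Real.rpow_zero, hfx, mul_zero, zero_mul, sub_zero, one_mul, hpdz,
        hpdg, zero_sub, zero_pow, ne_eq, OfNat.ofNat_ne_zero, not_false_eq_true,
        Finset.sum_const_zero, div_one, hhalf, add_zero, zero_div]
      have h2r : ∀ t : ℝ, t ^ (2:ℝ) = t ^ (2:ℕ) := fun t => by
        rw [show (2:ℝ) = ((2:ℕ):ℝ) by norm_num, Real.rpow_natCast]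
      have hper : ∀ α ∈ R, κ α * -(((0:ℝ) ^ (2:ℝ) - f (reflAt α x) ^ (2:ℝ)) / dotd α x ^ 2)
          = 2 * (κ α / dotd α x ^ 2 *
              if (0:ℝ) = f (reflAt α x) then 0 else f (reflAt α x) ^ 2 * (1 / 2)) := by
        intro α hα
        have hd := hx α hα
        rw [h2r, h2r]
        split_ifs with h
        · rw [← h]; norm_num
        · field_simp; ring
      rw [zero_add]
      have hs := Finset.sum_congr rfl hper
      rw [hs, ← Finset.mul_sum]
      ring
    · -- p < 2
      have h2p : (0:ℝ) < 2 - p := by linarith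
      simp only [Gp, hfx, Real.zero_rpow h2p.ne', zero_mul, mul_zero, zero_sub, neg_zero,
        hpdz, intervalIntegral.integral_zero, ite_self, zero_pow, ne_eq, OfNat.ofNat_ne_zero,
        not_false_eq_true, Finset.sum_const_zero, add_zero, zero_div, zero_add]
  · -- f x > 0
    have hgderiv : ∀ y, 0 < f y → ∀ i,
        pd (fun z => f z ^ p) i y = p * f y ^ (p - 1) * pd f i y := by
      intro y hy i
      have h := ((hfd y).hasFDerivAt.rpow_const (p := p) (Or.inl hy.ne')).fderiv
      rw [pd, h, ContinuousLinearMap.smul_apply, smul_eq_mul, pd]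
    have hnb : {y | 0 < f y} ∈ nhds x :=
      (isOpen_lt continuous_const hf.continuous).mem_nhds hupos
    have hEv : ∀ i, (pd (fun z => f z ^ p) i) =ᶠ[nhds x]
        (fun y => p * f y ^ (p - 1) * pd f i y) :=
      fun i => Filter.eventually_of_mem hnb (fun y hy => hgderiv y hy i)
    have hsec : ∀ i, pd (pd (fun z => f z ^ p) i) i x
        = p * f x ^ (p - 1) * pd (pd f i) i x
          + p * (p - 1) * f x ^ (p - 2) * (pd f i x) ^ 2 := by
      intro i
      rw [pd, (hEv i).fderiv_eq]
      have h1 : HasFDerivAt (fun y => f y ^ (p - 1))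
          (((p - 1) * f x ^ (p - 1 - 1)) • fderiv ℝ f x) x :=
        (hfd x).hasFDerivAt.rpow_const (p := p - 1) (Or.inl hupos.ne')
      have h3 := (h1.const_mul p).mul (hpdd i x).hasFDerivAt
      rw [HasFDerivAt.fderiv (f := fun y => p * f y ^ (p - 1) * pd f i y) h3, show p - 1 - 1 = p - 2 by ring]
      simp only [ContinuousLinearMap.add_apply, ContinuousLinearMap.smul_apply, smul_eq_mul]
      rw [← pd, ← pd]
      ring
    have hlap : f x ^ (2 - p) * lapd (fun z => f z ^ p) x
        = p * f x * lapd f x + p * (p - 1) * ∑ j, (pd f j x) ^ 2 := by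
      simp only [lapd, Finset.mul_sum]
      rw [← Finset.sum_add_distrib]
      apply Finset.sum_congr rfl
      intro i _
      rw [hsec i]
      have e2 := rpow_cancel2 (p := p) hupos
      have e3 := rpow_cancel3 (p := p) hupos
      linear_combination (p * pd (pd f i) i x) * e2 + (p * (p - 1) * (pd f i x) ^ 2) * e3
    have hfinal : f x ^ (2 - p) * (∑ α ∈ R, κ α *
          ((∑ i, α i * pd (fun z => f z ^ p) i x) / dotd α x
            - (f x ^ p - f (reflAt α x) ^ p) / (dotd α x) ^ 2))
        - p * f x * (∑ α ∈ R, κ α *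
          ((∑ i, α i * pd f i x) / dotd α x - (f x - f (reflAt α x)) / (dotd α x) ^ 2))
        = p * (p - 1) * ∑ α ∈ R, κ α / (dotd α x) ^ 2 *
            (if f x = f (reflAt α x) then 0 else
              (f (reflAt α x) - f x) ^ 2 *
                ∫ s in (0:ℝ)..1, (f x) ^ (2 - p) * (1 - s) /
                  ((1 - s) * f x + s * f (reflAt α x)) ^ (2 - p)) := by
      rw [Finset.mul_sum, Finset.mul_sum, Finset.mul_sum, ← Finset.sum_sub_distrib]
      apply Finset.sum_congr rfl
      intro α hα
      have hTg : (∑ i, α i * pd (fun z => f z ^ p) i x)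
          = p * f x ^ (p - 1) * ∑ i, α i * pd f i x := by
        rw [Finset.mul_sum]
        apply Finset.sum_congr rfl
        intro i _
        rw [hgderiv x hupos i]; ring
      rw [hTg]
      have e1 := rpow_cancel1 (p := p) hupos
      have e2 := rpow_cancel2 (p := p) hupos
      have hKey := lemKey hp1 hp2 hupos (hf0 (reflAt α x))
      split_ifs with hfv
      · have h0' : f x ^ (2 - p) * f (reflAt α x) ^ p - f x ^ 2
            - p * f x * (f (reflAt α x) - f x) = 0 := by
          rw [hKey, ← hfv]
          simp
        linear_combination (p * (∑ i, α i * pd f i x) * κ α / dotd α x) * e2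
          - (κ α / (dotd α x) ^ 2) * e1 + (κ α / (dotd α x) ^ 2) * h0'
      · linear_combination (p * (∑ i, α i * pd f i x) * κ α / dotd α x) * e2
          - (κ α / (dotd α x) ^ 2) * e1 + (κ α / (dotd α x) ^ 2) * hKey
    simp only [Gp, dunklLap]
    rw [one_div, inv_mul_eq_iff_eq_mul₀ hp0]
    linear_combination hlap + 2 * hfinal
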